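/- There exists a unique γ_cr > 0 such that Γ(γ_cr) = exp(γ_cr · ψ(γ_cr)), i.e. such that ln Γ(γ_cr) - γ_cr ψ(γ_cr) = 0; moreover γ_cr lies in the interval (1, 2). Equivalently, the function L(λ) = Γ(γ(λ))/λ^{γ(λ)} takes the value 1 at exactly one point λ_cr ∈ (0,∞). -/

import Mathlib

open Real Filter Set

/-- The digamma function `ψ = Γ'/Γ`. -/
noncomputable def digamma (x : ℝ) : ℝ := deriv Real.Gamma x / Real.Gamma x

/-!
`ψ` is the derivative of the convex function `log ∘ Γ`, hence monotone, and strictly so by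
`ψ (x + 1) = ψ x + 1 / x`. Convexity then makes `F x = log Γ(x) - x ψ(x)` strictly decreasing on
`(0, ∞)`, and `F 1 = γ_E > 0 > 2 (γ_E - 1) = F 2` (Euler–Mascheroni constant `γ_E < 2/3`), so `F`
has exactly one zero, lying in `(1, 2)`. Since `λ ^ γ(λ) = exp (γ(λ) ψ(γ(λ)))`, `L λ = 1` means
`F (γ(λ)) = 0`, and `γ` is injective because `ψ` is.
-/

theorem contDiffAt_Gamma_of_pos {x : ℝ} (hx : 0 < x) (n : WithTop ℕ∞) :
    ContDiffAt ℝ n Gamma x := by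
  have hU : IsOpen {s : ℂ | 0 < s.re} := isOpen_lt continuous_const Complex.continuous_re
  have hd : DifferentiableOn ℂ Complex.Gamma {s : ℂ | 0 < s.re} := fun s hs =>
    (Complex.differentiableAt_Gamma s fun m h => by
      have := congrArg Complex.re h
      simp only [Complex.neg_re, Complex.natCast_re] at this
      have hs' : 0 < s.re := hs
      linarith [(m.cast_nonneg : (0 : ℝ) ≤ m)]).differentiableWithinAt
  have hC : ContDiffAt ℂ n Complex.Gamma x :=
    (hd.contDiffOn hU).contDiffAt (hU.mem_nhds (by simpa using hx))
  simpa only [Complex.Gamma_ofReal, Complex.ofReal_re] using hC.real_of_complex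

theorem continuousOn_digamma : ContinuousOn digamma (Ioi 0) := by
  have hΓ : ContDiffOn ℝ 1 Gamma (Ioi 0) := fun x hx =>
    (contDiffAt_Gamma_of_pos hx 1).contDiffWithinAt
  exact (hΓ.continuousOn_deriv_of_isOpen isOpen_Ioi le_rfl).div hΓ.continuousOn
    fun x hx => (Gamma_pos_of_pos hx).ne'

theorem hasDerivAt_log_Gamma {x : ℝ} (hx : 0 < x) :
    HasDerivAt (log ∘ Gamma) (digamma x) x :=
  ((differentiableOn_Gamma_Ioi x hx).differentiableAt (Ioi_mem_nhds hx)).hasDerivAt.log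
    (Gamma_pos_of_pos hx).ne'

theorem digamma_monotoneOn : MonotoneOn digamma (Ioi 0) := by
  refine (convexOn_log_Gamma.monotoneOn_deriv fun x hx =>
    (hasDerivAt_log_Gamma hx).differentiableAt).congr fun x hx => ?_
  exact (hasDerivAt_log_Gamma hx).deriv

theorem digamma_add_one {x : ℝ} (hx : 0 < x) : digamma (x + 1) = digamma x + x⁻¹ := by
  have hΓ := ((differentiableOn_Gamma_Ioi x hx).differentiableAt (Ioi_mem_nhds hx)).hasDerivAt
  have hshift : HasDerivAt (fun y => Gamma (y + 1)) (1 * Gamma x + x * deriv Gamma x) x := by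
    refine (((hasDerivAt_id' x).mul hΓ).congr_of_eventuallyEq ?_)
    filter_upwards [Ioi_mem_nhds hx] with y hy using Gamma_add_one (ne_of_gt hy)
  have hderiv : deriv Gamma (x + 1) = 1 * Gamma x + x * deriv Gamma x := by
    rw [← hshift.deriv, deriv_comp_add_const]
  have hΓx := (Gamma_pos_of_pos hx).ne'
  rw [digamma, digamma, hderiv, Gamma_add_one hx.ne']
  field_simp
  ring

theorem digamma_strictMonoOn : StrictMonoOn digamma (Ioi 0) := by
  intro a ha b hb hab
  refine (digamma_monotoneOn ha hb hab.le).lt_of_ne fun h => ?_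
  have hshift : digamma (a + 1) ≤ digamma (b + 1) :=
    digamma_monotoneOn (mem_Ioi.mpr (add_pos ha one_pos)) (mem_Ioi.mpr (add_pos hb one_pos))
      (by linarith)
  rw [digamma_add_one ha, digamma_add_one hb, h] at hshift
  exact (inv_strictAntiOn ha hb hab).not_ge (by linarith)

theorem digamma_one : digamma 1 = -eulerMascheroniConstant := by
  rw [digamma, hasDerivAt_Gamma_one.deriv, Gamma_one, div_one]

theorem digamma_two : digamma 2 = 1 - eulerMascheroniConstant := by
  rw [show (2 : ℝ) = 1 + 1 by norm_num, digamma_add_one one_pos, digamma_one]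
  ring

/-- `log L(λ)` at `λ = exp (ψ x)`, i.e. at the point with `γ(λ) = x`. -/
noncomputable def logGammaSubMulDigamma (x : ℝ) : ℝ := log (Gamma x) - x * digamma x

theorem logGammaSubMulDigamma_strictAntiOn : StrictAntiOn logGammaSubMulDigamma (Ioi 0) := by
  intro a ha b hb hab
  -- convexity of `log ∘ Gamma` bounds its increment by `ψ b (b - a)`, leaving `a (ψ a - ψ b) < 0`
  have hslope := convexOn_log_Gamma.slope_le_deriv ha hb hab
    (hasDerivAt_log_Gamma hb).differentiableAt
  rw [(hasDerivAt_log_Gamma hb).deriv, slope_def_field, div_le_iff₀ (sub_pos.mpr hab)] at hslope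
  have hψ : a * digamma a < a * digamma b :=
    mul_lt_mul_of_pos_left (digamma_strictMonoOn ha hb hab) ha
  simp only [logGammaSubMulDigamma, Function.comp_apply] at hslope ⊢
  nlinarith

theorem Gamma_eq_exp_mul_digamma_iff {x : ℝ} (hx : 0 < x) :
    Gamma x = exp (x * digamma x) ↔ logGammaSubMulDigamma x = 0 := by
  rw [logGammaSubMulDigamma, sub_eq_zero]
  exact ⟨fun h => by rw [h, log_exp], fun h => by rw [← h, exp_log (Gamma_pos_of_pos hx)]⟩

theorem exists_mem_Ioo_logGammaSubMulDigamma_eq_zero :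
    ∃ x ∈ Ioo (1 : ℝ) 2, logGammaSubMulDigamma x = 0 := by
  have hcont : ContinuousOn logGammaSubMulDigamma (Icc 1 2) := by
    have hsub : Icc (1 : ℝ) 2 ⊆ Ioi 0 := fun x hx => by simp only [mem_Ioi]; linarith [hx.1]
    refine (ContinuousOn.log ?_ fun x hx => (Gamma_pos_of_pos (hsub hx)).ne').sub
      (continuousOn_id.mul (continuousOn_digamma.mono hsub))
    exact (differentiableOn_Gamma_Ioi.continuousOn).mono hsub
  have h1 : 0 < logGammaSubMulDigamma 1 := by
    simp only [logGammaSubMulDigamma, Gamma_one, log_one, digamma_one]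
    linarith [one_half_lt_eulerMascheroniConstant]
  have h2 : logGammaSubMulDigamma 2 < 0 := by
    simp only [logGammaSubMulDigamma, Gamma_two, log_one, digamma_two]
    linarith [eulerMascheroniConstant_lt_two_thirds]
  exact intermediate_value_Ioo' one_le_two hcont ⟨h2, h1⟩

theorem Gamma_div_rpow_eq_one_iff {x lam : ℝ} (h : exp (digamma x) = lam) :
    Gamma x / lam ^ x = 1 ↔ Gamma x = exp (x * digamma x) := by
  rw [← h, ← exp_mul, mul_comm, div_eq_one_iff_eq (exp_pos _).ne']

theorem critical_gamma_exists_unique (γfun : ℝ → ℝ)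
    (hγ : ∀ lam : ℝ, 0 < lam →
      0 < γfun lam ∧ Real.exp (digamma (γfun lam)) = lam)
    (L : ℝ → ℝ)
    (hL : ∀ lam : ℝ, 0 < lam → L lam = Real.Gamma (γfun lam) / lam ^ γfun lam) :
    (∃ γcr : ℝ, 1 < γcr ∧ γcr < 2 ∧
      Real.Gamma γcr = Real.exp (γcr * digamma γcr) ∧
      ∀ γ : ℝ, 0 < γ → Real.Gamma γ = Real.exp (γ * digamma γ) → γ = γcr) ∧
    (∃! lam : ℝ, 0 < lam ∧ L lam = 1) := by
  obtain ⟨γcr, ⟨h1, h2⟩, hzero⟩ := exists_mem_Ioo_logGammaSubMulDigamma_eq_zero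
  have hpos : 0 < γcr := one_pos.trans h1
  have crit_iff (γ : ℝ) (hγpos : 0 < γ) : Gamma γ = exp (γ * digamma γ) ↔ γ = γcr := by
    rw [Gamma_eq_exp_mul_digamma_iff hγpos]
    exact ⟨fun h => logGammaSubMulDigamma_strictAntiOn.injOn hγpos hpos (h.trans hzero.symm),
      fun h => h ▸ hzero⟩
  have L_iff (lam : ℝ) (hlam : 0 < lam) : L lam = 1 ↔ γfun lam = γcr := by
    rw [hL lam hlam, Gamma_div_rpow_eq_one_iff (hγ lam hlam).2, crit_iff _ (hγ lam hlam).1]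
  have hlam_cr := exp_pos (digamma γcr)
  refine ⟨⟨γcr, h1, h2, (crit_iff γcr hpos).2 rfl, fun γ hγpos h => (crit_iff γ hγpos).1 h⟩,
    exp (digamma γcr), ⟨hlam_cr, ?_⟩, ?_⟩
  · obtain ⟨hg, hexp⟩ := hγ _ hlam_cr
    exact (L_iff _ hlam_cr).2 (digamma_strictMonoOn.injOn hg hpos (exp_injective hexp))
  · rintro lam ⟨hlam, h⟩
    rw [← (hγ lam hlam).2, (L_iff lam hlam).1 h]
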